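/- arXiv:1304.6388 — 2 statements merged into one kernel-verified Lean document; each statement's English description precedes it below -/
import Mathlib

section
/- The relation ≺ on locally finite complete derivation trees of G is irreflexive and transitive, and it admits no infinite strictly decreasing sequence; that is, ≺ is a well-founded strict partial order on the locally finite complete derivation trees of G. -/
/-! ## Countable words over an alphabet -/

/-- A "preword" over `A`: a countable linear order realized as a set of rationals,
together with a labeling of its elements by letters of `A`. -/
structure PreWord (A : Type) : Type where
  carrier : Set ℚ
  label : carrier → A

namespace PreWord

/-- Two prewords are equivalent iff there is an order isomorphism between their
carriers preserving the labels. -/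
def Equiv {A : Type} (u v : PreWord A) : Prop :=
  ∃ f : u.carrier ≃o v.carrier, ∀ q, v.label (f q) = u.label q

theorem Equiv.refl {A : Type} (u : PreWord A) : Equiv u u :=
  ⟨OrderIso.refl _, fun _ => rfl⟩

theorem Equiv.symm {A : Type} {u v : PreWord A} : Equiv u v → Equiv v u := by
  rintro ⟨f, hf⟩
  exact ⟨f.symm, fun q => by rw [← hf (f.symm q), OrderIso.apply_symm_apply]⟩

theorem Equiv.trans {A : Type} {u v w : PreWord A} : Equiv u v → Equiv v w → Equiv u w := by
  rintro ⟨f, hf⟩ ⟨g, hg⟩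
  exact ⟨f.trans g, fun q => by rw [OrderIso.trans_apply, hg, hf]⟩

instance setoid (A : Type) : Setoid (PreWord A) where
  r := Equiv
  iseqv := ⟨Equiv.refl, Equiv.symm, Equiv.trans⟩

end PreWord

/-- A countable word over `A`: an isomorphism class of labeled countable linear orders. -/
def Word (A : Type) : Type := Quotient (PreWord.setoid A)

namespace Word

/-- The word determined by an arbitrary countable linear order `I` with labeling `lab`. -/
noncomputable def of {I A : Type} [LinearOrder I] [Countable I] (lab : I → A) : Word A :=
  let e : I ↪o ℚ := (Order.embedding_from_countable_to_dense I ℚ).some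
  Quotient.mk _ ⟨Set.range e, fun q => lab (Classical.choose q.2)⟩

/-- The empty word. -/
def eps (A : Type) : Word A :=
  Quotient.mk _ ⟨∅, fun q => absurd q.2 (Set.notMem_empty q.1)⟩

/-- The one-letter word. -/
def letter {A : Type} (a : A) : Word A :=
  Quotient.mk _ ⟨{(0 : ℚ)}, fun _ => a⟩

/-- Relabeling of a word along a function. -/
noncomputable def map {A B : Type} (g : A → B) (w : Word A) : Word B :=
  Quotient.mk _ ⟨(Quotient.out w).carrier, fun q => g ((Quotient.out w).label q)⟩

instance sigmaLexCountable {I : Type} (κ : I → Type) [Countable I] [∀ i, Countable (κ i)] :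
    Countable (Σₗ i, κ i) :=
  inferInstanceAs (Countable (Σ i, κ i))

/-- Generalized concatenation `∏_{i ∈ I} w i` of words over a countable linear order `I`:
the word on the lexicographically ordered disjoint sum of the underlying orders. -/
noncomputable def concat {I A : Type} [LinearOrder I] [Countable I] (w : I → Word A) : Word A :=
  Word.of (I := Σₗ i : I, (Quotient.out (w i)).carrier)
    (fun p => (Quotient.out (w (ofLex p).1)).label (ofLex p).2)

/-- Binary concatenation of words. -/
noncomputable def append {A : Type} (u v : Word A) : Word A :=
  concat (I := Fin 2) ![u, v]

/-- The finite word given by a list of letters. -/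
noncomputable def ofList {A : Type} (l : List A) : Word A :=
  Word.of (I := Fin l.length) l.get

/-- Concatenation of a finite list of words. -/
noncomputable def concatList {A : Type} (l : List (Word A)) : Word A :=
  concat (I := Fin l.length) l.get

/-- A word is scattered if its underlying linear order has no suborder isomorphic to `ℚ`,
equivalently there is no order embedding of `ℚ` into it. -/
def IsScattered {A : Type} (w : Word A) : Prop :=
  IsEmpty (ℚ ↪o (Quotient.out w).carrier)

/-- A word is well-ordered if its underlying linear order has no suborder isomorphic to the
negative integers, i.e. there is no order embedding of `ℕᵒᵈ` into it. -/
def IsWellOrdered {A : Type} (w : Word A) : Prop :=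
  IsEmpty (ℕᵒᵈ ↪o (Quotient.out w).carrier)

end Word

/-! ## Languages and their operations -/

namespace Lang

/-- Concatenation of languages. -/
noncomputable def conc {A : Type} (L₁ L₂ : Set (Word A)) : Set (Word A) :=
  {w | ∃ u ∈ L₁, ∃ v ∈ L₂, w = Word.append u v}

/-- ω-power of a language: `L^ω = {∏_{i∈ℕ} w i : ∀ i, w i ∈ L}`. -/
noncomputable def omegaPow {A : Type} (L : Set (Word A)) : Set (Word A) :=
  {w | ∃ f : ℕ → Word A, (∀ i, f i ∈ L) ∧ w = Word.concat f}

end Lang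
/-! ## Muller context-free grammars and derivation trees

Nonterminals `V` and terminals `T` are kept disjoint by using the sum type `V ⊕ T`.
The label `none` represents `ε`. Children of a node `x` are `x·1, …, x·n` (1-indexed). -/

/-- A Muller context-free grammar with nonterminal alphabet `V` and terminal alphabet `T`. -/
structure MCFG (V T : Type) where
  /-- the finite set of productions `A → α` -/
  prods : Finset (V × List (V ⊕ T))
  /-- the start symbol -/
  start : V
  /-- the set of (nonempty) accepting sets -/
  accept : Finset (Finset V)
  accept_nonempty : ∀ F ∈ accept, F.Nonempty

variable {V T : Type}

/-- A derivation tree of the grammar `G`: a labeled tree domain satisfying the local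
production condition at inner nodes and the Muller condition on infinite paths.
The value of `label` outside `dom` is irrelevant. -/
structure DerivTree (G : MCFG V T) where
  /-- the tree domain: a nonempty prefix-closed set of finite sequences -/
  dom : Set (List ℕ)
  root_mem : [] ∈ dom
  prefix_closed : ∀ ⦃x y : List ℕ⦄, y ∈ dom → x <+: y → x ∈ dom
  /-- the labeling; `none` codes `ε`, `some (Sum.inl A)` a nonterminal, `some (Sum.inr a)`
  a terminal -/
  label : List ℕ → Option (V ⊕ T)
  /-- every inner node is labeled by the left-hand side of a production whose right-hand
  side labels its children `x·1, …, x·n`; productions with empty right-hand side give one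
  single child labeled `ε` -/
  inner_node : ∀ x ∈ dom, (∃ i, x ++ [i] ∈ dom) →
    ∃ A : V, ∃ α : List (V ⊕ T), (A, α) ∈ G.prods ∧ label x = some (Sum.inl A) ∧
      (α = [] → (∀ i : ℕ, x ++ [i] ∈ dom ↔ i = 1) ∧ label (x ++ [1]) = none) ∧
      (α ≠ [] →
        (∀ i : ℕ, x ++ [i] ∈ dom ↔ 1 ≤ i ∧ i ≤ α.length) ∧
        (∀ j : ℕ, ∀ h : j < α.length, label (x ++ [j + 1]) = some (α.get ⟨j, h⟩)))
  /-- Muller acceptance: along every infinite path, the set of nonterminals occurring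
  infinitely often as labels is an accepting set -/
  muller : ∀ b : ℕ → ℕ, (∀ n : ℕ, (List.ofFn fun k : Fin n => b k) ∈ dom) →
    ∃ F ∈ G.accept, ∀ A : V,
      A ∈ F ↔ ∀ N : ℕ, ∃ n ≥ N, label (List.ofFn fun k : Fin n => b k) = some (Sum.inl A)

namespace DerivTree

variable {G : MCFG V T}

/-- `x` is a leaf of `t`. -/
def IsLeaf (t : DerivTree G) (x : List ℕ) : Prop :=
  x ∈ t.dom ∧ ∀ i : ℕ, x ++ [i] ∉ t.dom

/-- A derivation tree is complete if all its leaves are labeled in `Σ ∪ {ε}`. -/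
def IsComplete (t : DerivTree G) : Prop :=
  ∀ x : List ℕ, t.IsLeaf x → ∀ A : V, t.label x ≠ some (Sum.inl A)

/-- A derivation tree is locally finite if every node has a descendant which is a leaf. -/
def LocallyFinite (t : DerivTree G) : Prop :=
  ∀ x ∈ t.dom, ∃ y : List ℕ, x <+: y ∧ t.IsLeaf y

/-- The labeled frontier of a derivation tree: the word over `V ⊕ T` formed by the leaves
not labeled `ε`, in the lexicographic order, with the inherited labels. -/
noncomputable def lfr (t : DerivTree G) : Word (V ⊕ T) :=
  Word.of (I := {x : List ℕ // t.IsLeaf x ∧ t.label x ≠ none})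
    (fun x => Classical.choose (Option.ne_none_iff_exists'.mp x.2.2))

/-- The language generated by `G` from the nonterminal `A`: the set of words over the
terminal alphabet whose image under the inclusion `T → V ⊕ T` is the labeled frontier of
some complete `A`-tree. -/
noncomputable def _root_.MCFG.lang (G : MCFG V T) (A : V) : Set (Word T) :=
  {w | ∃ t : DerivTree G, t.IsComplete ∧ t.label [] = some (Sum.inl A) ∧
        Word.map Sum.inr w = t.lfr}

end DerivTree

/-- `L` is a Muller context-free language over the terminal alphabet `T`. -/
def IsMCFL {T : Type} (L : Set (Word T)) : Prop :=
  ∃ (V : Type) (_ : Fintype V) (G : MCFG V T), L = G.lang G.start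

/-- The properties of the normal form of Muller context-free grammars generating scattered
words used here: every derivation tree can be replaced by a locally finite one with the
same root symbol and the same labeled frontier, and the labeled frontier of every
derivation tree is scattered. -/
def MCFG.InNormalForm (G : MCFG V T) : Prop :=
  (∀ t : DerivTree G, ∃ t' : DerivTree G, t'.LocallyFinite ∧
      t'.label [] = t.label [] ∧ t'.lfr = t.lfr) ∧
  (∀ t : DerivTree G, t.lfr.IsScattered)
/-! ## The Hausdorff hierarchy and ranks -/

/-- `parts` is a decomposition of `s` as the ordered sum `∑_{i∈I} parts i`:
the parts cover `s` and appear in increasing order. -/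
def SumDecomp {I : Type} [LT I] (s : Set ℚ) (parts : I → Set ℚ) : Prop :=
  (⋃ i, parts i) = s ∧ ∀ i j : I, i < j → ∀ x ∈ parts i, ∀ y ∈ parts j, x < y

/-- The Hausdorff hierarchy (in the variant of Khoussainov–Rubin–Stephan) on suborders of
`ℚ`: `VD 0` is the class of finite orders, and for `α > 0`, `VD α` consists of the finite
sums of orders of the form `∑_{i∈ℤ} I_i` with each `I_i ∈ VD β_i` for some `β_i < α`. -/
noncomputable def VD : Ordinal.{0} → Set (Set ℚ) :=
  Ordinal.lt_wf.fix fun α ih =>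
    if α = 0 then {s | s.Finite}
    else
      {s | ∃ n : ℕ, ∃ big : Fin n → Set ℚ, SumDecomp s big ∧
        ∀ j : Fin n, ∃ parts : ℤ → Set ℚ, SumDecomp (big j) parts ∧
          ∀ i : ℤ, ∃ β : Ordinal, ∃ hβ : β < α, parts i ∈ ih β hβ}

/-- The Hausdorff rank of a suborder of `ℚ`: the least `α` with `s ∈ VD α`. -/
noncomputable def hrank (s : Set ℚ) : Ordinal :=
  sInf {α | s ∈ VD α}

/-- The Hausdorff rank of a countable linear order. -/
noncomputable def orderRank (I : Type) [LinearOrder I] [Countable I] : Ordinal :=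
  hrank (Set.range ((Order.embedding_from_countable_to_dense I ℚ).some : I ↪o ℚ))

/-- The Hausdorff rank of a (scattered) word. -/
noncomputable def Word.rank {A : Type} (w : Word A) : Ordinal :=
  hrank (Quotient.out w).carrier

namespace DerivTree

variable {V T : Type} {G : MCFG V T}

/-- `rank(t|_x)`: the Hausdorff rank of the labeled frontier of the subtree of `t`
rooted at `x`, i.e. of the lexicographically ordered set of non-`ε`-labeled leaves of `t`
that are descendants of `x`. -/
noncomputable def nodeRank (t : DerivTree G) (x : List ℕ) : Ordinal :=
  orderRank {y : List ℕ // x <+: y ∧ t.IsLeaf y ∧ t.label y ≠ none}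

/-- `rank(t) = rank(lfr(t))`. -/
noncomputable def rank (t : DerivTree G) : Ordinal :=
  Word.rank t.lfr

/-- The set of nodes of `t` of maximal rank. -/
noncomputable def maxNodes (t : DerivTree G) : Set (List ℕ) :=
  {x | x ∈ t.dom ∧ t.nodeRank x = t.rank}

end DerivTree

/-! ## Paths -/

/-- `P` is a path of the tree domain (or prefix of a tree domain) `D`: a nonempty,
prefix-closed subset of `D` in which every node has at most one child. -/
def IsPathIn (D P : Set (List ℕ)) : Prop :=
  P ⊆ D ∧ [] ∈ P ∧ (∀ ⦃x y : List ℕ⦄, y ∈ P → x <+: y → x ∈ P) ∧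
    ∀ (x : List ℕ) (i j : ℕ), x ++ [i] ∈ P → x ++ [j] ∈ P → i = j

/-- `P` is a maximal path of `D`. -/
def IsMaxPathIn (D P : Set (List ℕ)) : Prop :=
  IsPathIn D P ∧ ∀ Q : Set (List ℕ), IsPathIn D Q → P ⊆ Q → Q = P

namespace DerivTree

variable {V T : Type} {G : MCFG V T}

/-- The set of maximal paths covering the nodes of maximal rank. -/
noncomputable def maxPaths (t : DerivTree G) : Set (Set (List ℕ)) :=
  {P | IsMaxPathIn t.maxNodes P}

/-- `level(t)`: the number of maximal paths covering `maxNodes t`. -/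
noncomputable def level (t : DerivTree G) : ℕ :=
  (t.maxPaths).ncard

/-- `|branch(t)|`: the length of the longest common prefix of the maximal paths covering
`maxNodes t`. -/
noncomputable def branchLen (t : DerivTree G) : ℕ∞ :=
  ⨆ x ∈ ⋂₀ t.maxPaths, (x.length : ℕ∞)

/-- The labels occurring in `P` at or above (i.e. at descendants of) the node `x`. -/
def labelsFrom (t : DerivTree G) (P : Set (List ℕ)) (x : List ℕ) : Set (Option (V ⊕ T)) :=
  {l | ∃ y ∈ P, x <+: y ∧ t.label y = l}

/-- The labels occurring infinitely often on the (infinite) path `P`. -/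
def infLabels (t : DerivTree G) (P : Set (List ℕ)) : Set (Option (V ⊕ T)) :=
  {l | ∀ N : ℕ, ∃ y ∈ P, N ≤ y.length ∧ t.label y = l}

/-- `|head(P)|` for a path `P` of `t`: for infinite `P`, the length of the least node `x`
of `P` with `infLabels P = labelsFrom P x`; for finite `P`, the length of its last node. -/
noncomputable def headLen (t : DerivTree G) (P : Set (List ℕ)) : ℕ :=
  open Classical in
  if P.Infinite then
    sInf {n : ℕ | ∃ x ∈ P, x.length = n ∧ t.infLabels P = t.labelsFrom P x}
  else
    sSup {n : ℕ | ∃ x ∈ P, x.length = n}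

/-- `|head(π)|` where `π` is the unique maximal path whose nodes form `maxNodes t`
(meaningful when `level t = 1`, in which case `maxNodes t` is itself that path). -/
noncomputable def headLenMax (t : DerivTree G) : ℕ :=
  t.headLen t.maxNodes

/-- The well-founded strict order `≺` on locally finite complete derivation trees. -/
def prec (t' t : DerivTree G) : Prop :=
  t'.rank < t.rank ∨
  (t'.rank = t.rank ∧ t'.level < t.level) ∨
  (t'.rank = t.rank ∧ t'.level = t.level ∧ 1 < t.level ∧ t'.branchLen < t.branchLen) ∨
  (t'.rank = t.rank ∧ t'.level = t.level ∧ t.level = 1 ∧ t'.headLenMax < t.headLenMax)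

/-- `P` is the central path of `t`: the unique infinite path contained in `maxNodes t`. -/
def IsCentralPath (t : DerivTree G) (P : Set (List ℕ)) : Prop :=
  IsPathIn t.maxNodes P ∧ P.Infinite ∧
    ∀ Q : Set (List ℕ), IsPathIn t.maxNodes Q → Q.Infinite → Q = P

/-- `t` is simple: `maxNodes t` contains a single infinite path `π`, and
`infLabels(π) = labels(π)`, i.e. `head(π)` is the root. -/
def IsSimple (t : DerivTree G) : Prop :=
  ∃ P : Set (List ℕ), t.IsCentralPath P ∧ t.infLabels P = t.labelsFrom P []

/-- `t` is an `F`-simple `A`-tree: a simple tree with root symbol `A` whose central path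
has label set `F`. -/
def IsFSimple (t : DerivTree G) (F : Finset V) (A : V) : Prop :=
  t.label [] = some (Sum.inl A) ∧
  ∃ P : Set (List ℕ), t.IsCentralPath P ∧ t.infLabels P = t.labelsFrom P [] ∧
    t.labelsFrom P [] = {l | ∃ B ∈ F, l = some (Sum.inl B)}

end DerivTree

/-! `≺` is exactly the inverse image of the lexicographic order on `(rank, level, key)`, where
the key is `|head(π)|` at level one, `|branch|` at higher levels, and constant at level zero,
where `≺` does not compare beyond the level. A lexicographic product of well-orders is a
well-order, and inverse images of well-founded strict orders are well-founded strict orders. -/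

namespace DerivTree

variable {V T : Type} {G : MCFG V T}

noncomputable def precKey (t : DerivTree G) : ℕ∞ :=
  if t.level = 0 then 0 else if t.level = 1 then t.headLenMax else t.branchLen

theorem precKey_lt_iff {t' t : DerivTree G} (h : t'.level = t.level) :
    t'.precKey < t.precKey ↔
      (1 < t.level ∧ t'.branchLen < t.branchLen) ∨
        (t.level = 1 ∧ t'.headLenMax < t.headLenMax) := by
  unfold precKey
  rw [h]
  rcases Nat.lt_trichotomy t.level 1 with hl | hl | hl
  · simp [show t.level = 0 by omega]
  · simp [hl]
  · simp [show t.level ≠ 0 by omega, show t.level ≠ 1 by omega, hl]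

noncomputable def precMeasure (t : DerivTree G) : Ordinal ×ₗ (ℕ ×ₗ ℕ∞) :=
  toLex (t.rank, toLex (t.level, t.precKey))

theorem prec_iff_precMeasure_lt {t' t : DerivTree G} :
    prec t' t ↔ t'.precMeasure < t.precMeasure := by
  simp only [prec, precMeasure, Prod.Lex.toLex_lt_toLex]
  by_cases h : t'.level = t.level
  · simp only [h, precKey_lt_iff h, lt_irrefl, true_and, false_or]
    tauto
  · simp only [h, false_and, and_false, or_false]

theorem wellFounded_prec : WellFounded (prec : DerivTree G → DerivTree G → Prop) :=
  Subrelation.wf prec_iff_precMeasure_lt.mp (InvImage.wf precMeasure wellFounded_lt)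

end DerivTree

theorem prec_isWellFoundedStrictOrder_general (V T : Type) (G : MCFG V T) :
    (∀ t : DerivTree G, t.LocallyFinite → t.IsComplete → ¬ DerivTree.prec t t) ∧
    (∀ t₁ t₂ t₃ : DerivTree G,
      t₁.LocallyFinite → t₁.IsComplete → t₂.LocallyFinite → t₂.IsComplete →
      t₃.LocallyFinite → t₃.IsComplete →
      DerivTree.prec t₁ t₂ → DerivTree.prec t₂ t₃ → DerivTree.prec t₁ t₃) ∧
    (¬ ∃ f : ℕ → DerivTree G, (∀ n, (f n).LocallyFinite ∧ (f n).IsComplete) ∧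
        ∀ n, DerivTree.prec (f (n + 1)) (f n)) := by
  refine ⟨fun t _ _ h => lt_irrefl _ (DerivTree.prec_iff_precMeasure_lt.mp h), ?_, ?_⟩
  · intro t₁ t₂ t₃ _ _ _ _ _ _ h₁₂ h₂₃
    rw [DerivTree.prec_iff_precMeasure_lt] at h₁₂ h₂₃ ⊢
    exact h₁₂.trans h₂₃
  · rintro ⟨f, -, hf⟩
    exact (wellFounded_iff_isEmpty_descending_chain.mp DerivTree.wellFounded_prec).false ⟨f, hf⟩

/-- The relation `≺` is an irreflexive, transitive relation on the locally finite complete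
derivation trees of `G`, admitting no infinite strictly decreasing sequence; that is, it is
a well-founded strict partial order on these trees. -/
theorem prec_isWellFoundedStrictOrder (V T : Type) [Fintype V] [Nonempty V]
    [Fintype T] [Nonempty T] (G : MCFG V T) (hG : G.InNormalForm) :
    (∀ t : DerivTree G, t.LocallyFinite → t.IsComplete → ¬ DerivTree.prec t t) ∧
    (∀ t₁ t₂ t₃ : DerivTree G,
      t₁.LocallyFinite → t₁.IsComplete → t₂.LocallyFinite → t₂.IsComplete →
      t₃.LocallyFinite → t₃.IsComplete →
      DerivTree.prec t₁ t₂ → DerivTree.prec t₂ t₃ → DerivTree.prec t₁ t₃) ∧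
    (¬ ∃ f : ℕ → DerivTree G, (∀ n, (f n).LocallyFinite ∧ (f n).IsComplete) ∧
        ∀ n, DerivTree.prec (f (n + 1)) (f n)) :=
  prec_isWellFoundedStrictOrder_general V T G
end

section
/- Every F-simple A-tree t of G has a prefix of the form t_w for some w ∈ R_{A,F}: there exist w ∈ R_{A,F} and, for each leaf x of t_w, a derivation tree t_x of G with root symbol t_w(x), such that t is the tree obtained from t_w by substituting t_x for each leaf x of t_w. -/
/-! ## Pairs of words and their operations -/

namespace PairLang

/-- Product of pairs of words: `(u,v)·(u',v') = (uu', v'v)`. -/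
noncomputable def pairMul {A : Type} (p q : Word A × Word A) : Word A × Word A :=
  (Word.append p.1 q.1, Word.append q.2 p.2)

/-- Concatenation of sets of pairs of words. -/
noncomputable def conc {A : Type} (L L' : Set (Word A × Word A)) : Set (Word A × Word A) :=
  {r | ∃ p ∈ L, ∃ q ∈ L', r = pairMul p q}

/-- Kleene star of a set of pairs of words: `L^* = {(ε,ε)} ∪ L ∪ L·L ∪ ⋯`. -/
noncomputable def star {A : Type} (L : Set (Word A × Word A)) : Set (Word A × Word A) :=
  {r | ∃ l : List (Word A × Word A), (∀ p ∈ l, p ∈ L) ∧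
        r = l.foldr pairMul (Word.eps A, Word.eps A)}

instance sumLexCountable : Countable (ℕ ⊕ₗ ℕᵒᵈ) :=
  inferInstanceAs (Countable (ℕ ⊕ ℕᵒᵈ))

/-- The word `∏_{i∈ℕ}(u_i, v_i) = (u₀u₁⋯)(⋯v₁v₀)`: the concatenation of the first
components in increasing order of `i` followed by the second components in decreasing
order of `i`. -/
noncomputable def omegaWord {A : Type} (f : ℕ → Word A × Word A) : Word A :=
  Word.concat (I := ℕ ⊕ₗ ℕᵒᵈ)
    (fun i => Sum.elim (fun n : ℕ => (f n).1)
      (fun n : ℕᵒᵈ => (f (OrderDual.ofDual n)).2) (ofLex i))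

/-- ω-power of a set of pairs of words, a language of words. -/
noncomputable def omegaPow {A : Type} (L : Set (Word A × Word A)) : Set (Word A) :=
  {w | ∃ f : ℕ → Word A × Word A, (∀ i, f i ∈ L) ∧ w = omegaWord f}

/-- `L₁ × L₂ = {(u,v) : u ∈ L₁, v ∈ L₂}`. -/
def prod {A : Type} (L₁ L₂ : Set (Word A)) : Set (Word A × Word A) :=
  {p | p.1 ∈ L₁ ∧ p.2 ∈ L₂}

end PairLang
variable {V T : Type}

/-! ## The ω-regular languages `R_{A,F}` and the trees `t_w` -/

/-- The sequence `A = A₀, A₁, A₂, …` of nonterminals along a `Γ`-word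
`w = (α₁,A₁,β₁)(α₂,A₂,β₂)⋯` (coded as `w n = (α_{n+1}, A_{n+1}, β_{n+1})`). -/
def nthNT {V T : Type} (A : V) (w : ℕ → List (V ⊕ T) × V × List (V ⊕ T)) : ℕ → V
  | 0 => A
  | n + 1 => (w n).2.1

namespace MCFG

variable {V T : Type} (G : MCFG V T)

/-- `w ∈ R_{A,F}`: setting `A₀ = A`, we have `A₀ ∈ F`, every `A_i ∈ F`, every
`A_{i-1} → α_i A_i β_i` is a production, and the set of nonterminals occurring infinitely
often in `A₀, A₁, …` is exactly `F`. -/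
def InRAF (A : V) (F : Finset V) (w : ℕ → List (V ⊕ T) × V × List (V ⊕ T)) : Prop :=
  A ∈ F ∧ (∀ n : ℕ, (w n).2.1 ∈ F) ∧
  (∀ n : ℕ, (nthNT A w n, (w n).1 ++ [Sum.inl (w n).2.1] ++ (w n).2.2) ∈ G.prods) ∧
  (∀ B : V, B ∈ F ↔ ∀ N : ℕ, ∃ n ≥ N, nthNT A w n = B)

end MCFG

/-- The nodes `x₀ = ε`, `x_i = x_{i-1}·(|α_i|+1)` of the central path of the tree `t_w`. -/
def centralNode {V T : Type} (w : ℕ → List (V ⊕ T) × V × List (V ⊕ T)) : ℕ → List ℕ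
  | 0 => []
  | n + 1 => centralNode w n ++ [(w n).1.length + 1]

/-- The tree domain of the tree `t_w`: the central path together with the children of its
nodes; `x_{i-1}` has `|α_i A_i β_i|` children, and nodes off the central path are leaves. -/
def twDom {V T : Type} (w : ℕ → List (V ⊕ T) × V × List (V ⊕ T)) : Set (List ℕ) :=
  {x | x = [] ∨ ∃ n j : ℕ, 1 ≤ j ∧ j ≤ (w n).1.length + 1 + (w n).2.2.length ∧
        x = centralNode w n ++ [j]}

/-- The labels of `t_w` agree with `t.label`: the central node `x_n` is labeled `A_n`, and
the children of `x_n` are labeled left to right by the letters of `α_{n+1} A_{n+1} β_{n+1}`. -/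
def TwLabels {V T : Type} {G : MCFG V T} (A : V)
    (w : ℕ → List (V ⊕ T) × V × List (V ⊕ T)) (t : DerivTree G) : Prop :=
  (∀ n : ℕ, t.label (centralNode w n) = some (Sum.inl (nthNT A w n))) ∧
  (∀ n j : ℕ, ∀ h : j < ((w n).1 ++ [Sum.inl (w n).2.1] ++ (w n).2.2).length,
    t.label (centralNode w n ++ [j + 1]) =
      some (((w n).1 ++ [Sum.inl (w n).2.1] ++ (w n).2.2).get ⟨j, h⟩))

/-! The central path `π` of an `F`-simple tree is infinite, and each of its nodes `x_n` has its
successor `x_{n+1}` on `π` as a child that is itself an inner node. So `x_n` is expanded by a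
nonempty production `A_n → α B β` whose distinguished occurrence of `B = A_{n+1}` sits at
`x_{n+1}`; the triples `(α, B, β)` read off along `π` form `w`. The Muller condition of
`R_{A,F}` is the simplicity of `t` (`infLabels π = labels π = F`). A node of `t` off `t_w`
leaves `π` through a child of some `x_n` other than `x_{n+1}`, i.e. through a leaf of `t_w`,
and the subtrees of `t` at these leaves are the trees `t_x`. -/

theorem frequently_add_iff {p : ℕ → Prop} (k : ℕ) :
    (∀ N, ∃ n ≥ N, p (k + n)) ↔ ∀ N, ∃ n ≥ N, p n := by
  simp only [← Filter.frequently_atTop, add_comm k, ← Filter.frequently_map (m := (· + k)),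
    Filter.map_add_atTop_eq_nat]

theorem List.ofFn_eq_streamTake {α : Type} (b : Stream' α) (n : ℕ) :
    List.ofFn (fun k : Fin n => b.get k) = b.take n := by
  apply List.ext_getElem <;> simp

namespace IsPathIn

variable {D E P : Set (List ℕ)}

theorem mono (h : IsPathIn D P) (hDE : D ⊆ E) : IsPathIn E P :=
  ⟨h.1.trans hDE, h.2⟩

theorem eq_of_length_eq (h : IsPathIn D P) :
    ∀ {y z : List ℕ}, y ∈ P → z ∈ P → y.length = z.length → y = z := by
  obtain ⟨-, -, hpre, hchild⟩ := h
  intro y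
  induction y using List.reverseRecOn with
  | nil => intro z _ _ hl; exact (List.length_eq_zero_iff.mp hl.symm).symm
  | append_singleton y i ih =>
    intro z hy hz hl
    obtain ⟨z, j, rfl⟩ :=
      (List.eq_nil_or_concat' z).resolve_left (by rintro rfl; simp at hl)
    obtain rfl := ih (hpre hy (List.prefix_append _ _)) (hpre hz (List.prefix_append _ _))
      (by simpa using hl)
    rw [hchild y i j hy hz]

theorem exists_mem_length_eq (h : IsPathIn D P) (hP : P.Infinite) (n : ℕ) :
    ∃ y ∈ P, y.length = n := by
  by_contra! hn
  have hlt : ∀ y ∈ P, y.length < n := fun y hy => by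
    by_contra! hge
    exact hn _ (h.2.2.1 hy (List.take_prefix n y)) (by simpa using hge)
  exact hP <| Set.Finite.of_finite_image
    ((Set.finite_Iio n).subset (by rintro - ⟨y, hy, rfl⟩; exact hlt y hy))
    fun y hy z hz hl => h.eq_of_length_eq hy hz hl

theorem exists_chain (h : IsPathIn D P) (hP : P.Infinite) :
    ∃ c : ℕ → List ℕ, P = Set.range c ∧ c 0 = [] ∧ ∀ n, ∃ j, c (n + 1) = c n ++ [j] := by
  choose c hcP hlen using h.exists_mem_length_eq hP
  refine ⟨c, ?_, List.length_eq_zero_iff.mp (hlen 0), fun n => ?_⟩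
  · exact Set.Subset.antisymm
      (fun y hy => ⟨y.length, h.eq_of_length_eq (hcP _) hy (hlen _)⟩)
      (Set.range_subset_iff.2 hcP)
  · obtain ⟨x, j, hx⟩ := (List.eq_nil_or_concat' (c (n + 1))).resolve_left
      (by intro he; simpa [he] using hlen (n + 1))
    have hxn : x = c n := h.eq_of_length_eq (h.2.2.1 (hcP (n + 1)) ⟨[j], hx.symm⟩) (hcP n)
      (by simpa [hx, hlen n] using hlen (n + 1))
    exact ⟨j, hxn ▸ hx⟩

end IsPathIn

abbrev rhsOf (s : List (V ⊕ T) × V × List (V ⊕ T)) : List (V ⊕ T) :=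
  s.1 ++ [Sum.inl s.2.1] ++ s.2.2

section CentralNode

variable (w : ℕ → List (V ⊕ T) × V × List (V ⊕ T))

@[simp]
theorem centralNode_length (n : ℕ) : (centralNode w n).length = n := by
  induction n with
  | zero => rfl
  | succ n ih => simp [centralNode, ih]

variable {w}

theorem append_mem_twDom {n j : ℕ} (hj : 1 ≤ j) (hjn : j ≤ (rhsOf (w n)).length) :
    centralNode w n ++ [j] ∈ twDom w :=
  Or.inr ⟨n, j, hj, by simp only [List.length_append, List.length_singleton] at hjn; omega, rfl⟩

theorem centralNode_mem_twDom (n : ℕ) : centralNode w n ∈ twDom w := by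
  cases n with
  | zero => exact Or.inl rfl
  | succ n => exact append_mem_twDom (by omega) (by simp)

theorem eq_centralNode_of_append_mem_twDom {x : List ℕ} {i : ℕ} (h : x ++ [i] ∈ twDom w) :
    x = centralNode w x.length := by
  obtain h | ⟨n, j, -, -, h⟩ := h
  · simp at h
  · obtain ⟨rfl, -⟩ := List.append_inj' h rfl
    simp

end CentralNode

namespace DerivTree

variable {G : MCFG V T}

def subtree (t : DerivTree G) (x : List ℕ) (hx : x ∈ t.dom) : DerivTree G where
  dom := {y | x ++ y ∈ t.dom}
  root_mem := by simpa using hx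
  prefix_closed _ _ hy hp := t.prefix_closed hy ((List.prefix_append_right_inj x).mpr hp)
  label y := t.label (x ++ y)
  inner_node y hy hchild := by
    simp only [Set.mem_ofPred_eq, ← List.append_assoc] at hchild ⊢
    exact t.inner_node (x ++ y) hy hchild
  muller b hb := by
    obtain ⟨b, rfl⟩ : ∃ s : Stream' ℕ, s.get = b := ⟨b, rfl⟩
    simp only [Set.mem_ofPred_eq, List.ofFn_eq_streamTake] at hb ⊢
    have hxb (n : ℕ) : List.ofFn (fun k : Fin n => (x ++ₛ b).get k) ∈ t.dom := by
      rw [List.ofFn_eq_streamTake]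
      rcases le_total n x.length with hn | hn
      · rw [Stream'.take_append_of_le_length _ _ _ hn]
        exact t.prefix_closed hx (List.take_prefix n x)
      · obtain ⟨m, rfl⟩ := Nat.exists_eq_add_of_le hn
        rw [← Stream'.append_take]
        exact hb m
    obtain ⟨F, hF, hiff⟩ := t.muller _ hxb
    refine ⟨F, hF, fun A => (hiff A).trans ?_⟩
    simp only [List.ofFn_eq_streamTake, Stream'.append_take]
    exact (frequently_add_iff x.length).symm

theorem exists_rhsOf_of_mem (t : DerivTree G) {x : List ℕ} {i j : ℕ}
    (h : x ++ [i] ++ [j] ∈ t.dom) :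
    ∃ (B : V) (s : List (V ⊕ T) × V × List (V ⊕ T)),
      t.label x = some (Sum.inl B) ∧ (B, rhsOf s) ∈ G.prods ∧ i = s.1.length + 1 ∧
      (∀ k, x ++ [k] ∈ t.dom ↔ 1 ≤ k ∧ k ≤ (rhsOf s).length) ∧
      ∀ k (hk : k < (rhsOf s).length),
        t.label (x ++ [k + 1]) = some ((rhsOf s).get ⟨k, hk⟩) := by
  have hxi : x ++ [i] ∈ t.dom := t.prefix_closed h (List.prefix_append _ _)
  obtain ⟨B, α, hprod, hlab, hnil, hcons⟩ :=
    t.inner_node x (t.prefix_closed hxi (List.prefix_append _ _)) ⟨i, hxi⟩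
  obtain ⟨C, -, -, hlabi, -⟩ := t.inner_node (x ++ [i]) hxi ⟨j, h⟩
  -- an `ε`-leaf has no children, so the production at `x` is not `B → ε`
  have hα : α ≠ [] := by
    rintro rfl
    obtain ⟨hone, hε⟩ := hnil rfl
    rw [(hone i).1 hxi, hε] at hlabi
    simp at hlabi
  obtain ⟨hmem, hlabel⟩ := hcons hα
  obtain ⟨hi, hiα⟩ := (hmem i).1 hxi
  obtain ⟨p, rfl⟩ : ∃ p, i = p + 1 := ⟨i - 1, by omega⟩
  have hp : p < α.length := by omega
  have hC : α[p] = Sum.inl C := by simpa [hlabi] using (hlabel p hp).symm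
  obtain ⟨s, hs, hsp⟩ : ∃ s, rhsOf s = α ∧ s.1.length = p :=
    ⟨(α.take p, C, α.drop (p + 1)), by simp [← hC], by simp; omega⟩
  subst hs
  exact ⟨B, s, hlab, hprod, by rw [hsp], hmem, hlabel⟩


/-- `t_w` is a prefix of `t`: each central node `x_n` of `t_w` is expanded in `t` by the
production `A_n → α_{n+1} A_{n+1} β_{n+1}`. -/
structure HasTwPrefix (t : DerivTree G) (A : V) (w : ℕ → List (V ⊕ T) × V × List (V ⊕ T)) :
    Prop where
  prod_mem : ∀ n, (nthNT A w n, rhsOf (w n)) ∈ G.prods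
  label_centralNode : ∀ n, t.label (centralNode w n) = some (Sum.inl (nthNT A w n))
  child_mem_iff : ∀ n k, centralNode w n ++ [k] ∈ t.dom ↔ 1 ≤ k ∧ k ≤ (rhsOf (w n)).length
  label_child : ∀ n k (hk : k < (rhsOf (w n)).length),
    t.label (centralNode w n ++ [k + 1]) = some ((rhsOf (w n)).get ⟨k, hk⟩)

theorem exists_hasTwPrefix (t : DerivTree G) {A : V} {P : Set (List ℕ)}
    (hroot : t.label [] = some (Sum.inl A)) (hP : IsPathIn t.dom P) (hinf : P.Infinite) :
    ∃ w, t.HasTwPrefix A w ∧ P = Set.range (centralNode w) := by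
  obtain ⟨c, rfl, hc0, hstep⟩ := hP.exists_chain hinf
  choose b hb using hstep
  have hgrand (n : ℕ) : c n ++ [b n] ++ [b (n + 1)] ∈ t.dom := by
    rw [← hb, ← hb]
    exact hP.1 ⟨n + 2, rfl⟩
  choose B w hlab hprod hbw hmem hlabel using fun n => t.exists_rhsOf_of_mem (hgrand n)
  have hcw : centralNode w = c := by
    funext n
    induction n with
    | zero => exact hc0.symm
    | succ n ih => rw [centralNode, ih, hb, hbw]
  have hB : ∀ n, B n = nthNT A w n := by
    rintro (_ | n)
    · simpa [hc0, hroot, nthNT, eq_comm] using hlab 0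
    · have := hlabel n (w n).1.length (by simp)
      rw [← hbw, ← hb, hlab] at this
      simpa [nthNT] using this
  subst hcw
  refine ⟨w, ⟨fun n => hB n ▸ hprod n, fun n => hB n ▸ hlab n, hmem, hlabel⟩, rfl⟩

namespace HasTwPrefix

variable {t : DerivTree G} {A : V} {w : ℕ → List (V ⊕ T) × V × List (V ⊕ T)}

theorem twDom_subset (hw : t.HasTwPrefix A w) : twDom w ⊆ t.dom := by
  rintro x (rfl | ⟨n, j, hj, hjn, rfl⟩)
  · exact t.root_mem
  · exact (hw.child_mem_iff n j).2 ⟨hj, by simp; omega⟩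

theorem mem_twDom_or_exists_leaf_prefix (hw : t.HasTwPrefix A w) {y : List ℕ}
    (hy : y ∈ t.dom) :
    y ∈ twDom w ∨ ∃ x ∈ twDom w, (∀ i : ℕ, x ++ [i] ∉ twDom w) ∧ x <+: y := by
  suffices h : ∀ d n, centralNode w n ++ d ∈ t.dom → centralNode w n ++ d ∈ twDom w ∨
      ∃ x ∈ twDom w, (∀ i : ℕ, x ++ [i] ∉ twDom w) ∧ x <+: centralNode w n ++ d from
    h y 0 hy
  intro d
  induction d with
  | nil => exact fun n _ => .inl (by simpa using centralNode_mem_twDom n)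
  | cons j d ih =>
    intro n hy
    obtain ⟨hj, hjn⟩ := (hw.child_mem_iff n j).1 (t.prefix_closed hy ⟨d, by simp⟩)
    by_cases hjc : j = (w n).1.length + 1
    · subst hjc
      simpa [centralNode] using ih (n + 1) (by simpa [centralNode] using hy)
    · refine .inr ⟨_, append_mem_twDom hj hjn, fun i hi => hjc ?_, ⟨d, by simp⟩⟩
      simpa [centralNode] using eq_centralNode_of_append_mem_twDom hi

theorem inRAF (hw : t.HasTwPrefix A w) {F : Finset V} {P : Set (List ℕ)}
    (hP : P = Set.range (centralNode w)) (hinf : t.infLabels P = t.labelsFrom P [])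
    (hF : t.labelsFrom P [] = {l | ∃ B ∈ F, l = some (Sum.inl B)}) :
    G.InRAF A F w := by
  subst hP
  have hmemF (n : ℕ) : nthNT A w n ∈ F := by
    have : some (Sum.inl (nthNT A w n)) ∈ t.labelsFrom (Set.range (centralNode w)) [] :=
      ⟨_, ⟨n, rfl⟩, List.nil_prefix, hw.label_centralNode n⟩
    obtain ⟨B, hB, he⟩ := hF ▸ this
    simp only [Option.some.injEq, Sum.inl.injEq] at he
    exact he ▸ hB
  refine ⟨hmemF 0, fun n => hmemF (n + 1), hw.prod_mem,
    fun B => ⟨fun hB N => ?_, fun hB => ?_⟩⟩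
  · have : some (Sum.inl B) ∈ t.infLabels (Set.range (centralNode w)) := by
      rw [hinf, hF]
      exact ⟨B, hB, rfl⟩
    obtain ⟨_, ⟨n, rfl⟩, hn, hl⟩ := this N
    rw [hw.label_centralNode] at hl
    exact ⟨n, by simpa using hn, by simpa using hl⟩
  · obtain ⟨n, -, rfl⟩ := hB 0
    exact hmemF n

end HasTwPrefix

end DerivTree

theorem fSimple_tree_has_tw_prefix_general (V T : Type) (G : MCFG V T)
    (A : V) (F : Finset V)
    (t : DerivTree G) (ht : t.IsFSimple F A) :
    ∃ w : ℕ → List (V ⊕ T) × V × List (V ⊕ T), G.InRAF A F w ∧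
      twDom w ⊆ t.dom ∧ TwLabels A w t ∧
      (∀ y ∈ t.dom, y ∈ twDom w ∨
        ∃ x ∈ twDom w, (∀ i : ℕ, x ++ [i] ∉ twDom w) ∧ x <+: y) ∧
      (∀ x ∈ twDom w, (∀ i : ℕ, x ++ [i] ∉ twDom w) →
        ∃ tx : DerivTree G, tx.dom = {y : List ℕ | x ++ y ∈ t.dom} ∧
          ∀ y ∈ tx.dom, tx.label y = t.label (x ++ y)) := by
  obtain ⟨hroot, P, ⟨hpath, hinf, -⟩, hhead, hF⟩ := ht
  obtain ⟨w, hw, hP⟩ := t.exists_hasTwPrefix hroot (hpath.mono fun _ hx => hx.1) hinf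
  exact ⟨w, hw.inRAF hP hhead hF, hw.twDom_subset, ⟨hw.label_centralNode, hw.label_child⟩,
    fun _ => hw.mem_twDom_or_exists_leaf_prefix,
    fun x hx _ => ⟨t.subtree x (hw.twDom_subset hx), rfl, fun _ _ => rfl⟩⟩

/-- Every `F`-simple `A`-tree `t` of `G` has a prefix of the form `t_w` for some
`w ∈ R_{A,F}`: `t` is obtained from `t_w` by substituting, for each leaf `x` of `t_w`,
a derivation tree `t_x` of `G` with root symbol `t_w(x)`. -/
theorem fSimple_tree_has_tw_prefix (V T : Type) [Fintype V] [Nonempty V]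
    [Fintype T] [Nonempty T] (G : MCFG V T) (hG : G.InNormalForm)
    (A : V) (F : Finset V) (hF : F ∈ G.accept)
    (t : DerivTree G) (ht : t.IsFSimple F A) :
    ∃ w : ℕ → List (V ⊕ T) × V × List (V ⊕ T), G.InRAF A F w ∧
      twDom w ⊆ t.dom ∧ TwLabels A w t ∧
      (∀ y ∈ t.dom, y ∈ twDom w ∨
        ∃ x ∈ twDom w, (∀ i : ℕ, x ++ [i] ∉ twDom w) ∧ x <+: y) ∧
      (∀ x ∈ twDom w, (∀ i : ℕ, x ++ [i] ∉ twDom w) →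
        ∃ tx : DerivTree G, tx.dom = {y : List ℕ | x ++ y ∈ t.dom} ∧
          ∀ y ∈ tx.dom, tx.label y = t.label (x ++ y)) :=
  fSimple_tree_has_tw_prefix_general V T G A F t ht
end
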